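/- arXiv:2312.02072 — 8 statements merged into one kernel-verified Lean document; each statement's English description precedes it below -/
import Mathlib

section
/- For all β > 0, K'(+0) − K'(−0) = 1/(1+β²). Consequently (using also that K'(0) = (K'(+0)+K'(−0))/2 is negative), K'(−0) < K'(+0) < −K'(−0), and in particular K'(−0) < 0. -/
open Real

/-- The kernel `K` of the logarithmic-spiral vortex-sheet system. -/
noncomputable def Kker (β θ : ℝ) : ℝ :=
  (1/4) * (Complex.exp ((2*((β:ℂ) - Complex.I)/(1+(β:ℂ)^2)) * ((θ:ℂ) - (Real.pi:ℂ))) /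
    Complex.sin (2*(Real.pi:ℂ)*(1+Complex.I*(β:ℂ))/(1+(β:ℂ)^2))).re

/-- The derivative `K'` of the kernel on `(0, 2π)`, given by the explicit formula;
`Kd β 0` is `K'(+0)` and `Kd β (2π)` is `K'(−0)` (the formula is continuous). -/
noncomputable def Kd (β θ : ℝ) : ℝ :=
  (2*β/(1+β^2)) * Kker β θ +
  (1/(2*(1+β^2))) * (Complex.exp ((2*((β:ℂ) - Complex.I)/(1+(β:ℂ)^2)) * ((θ:ℂ) - (Real.pi:ℂ))) /
    Complex.sin (2*(Real.pi:ℂ)*(1+Complex.I*(β:ℂ))/(1+(β:ℂ)^2))).im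

/-- `K'(0) = (K'(+0) + K'(−0))/2`. -/
noncomputable def Kd0 (β : ℝ) : ℝ := (Kd β 0 + Kd β (2*Real.pi))/2

/-- The second derivative `K''` of the kernel on `(0, 2π)`. -/
noncomputable def Kdd (β θ : ℝ) : ℝ := deriv (Kd β) θ

/-! With `z = 2π(1 + iβ)/(1 + β²)`, the exponent `w(θ - π)` equals `iz` at `θ = 0` and `-iz` at
`θ = 2π`, and `K'(θ) = Im(q(θ)(1 + iβ)) / (2(1 + β²))` for `q(θ) = exp(w(θ - π)) / sin z`.
Since `q(0) - q(2π) = 2i`, the jump is `1/(1 + β²)`. Since `q(0) + q(2π) = 2 cot z`, writing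
`z = x + iβx` with `x > 0`,
`(1 + β²)(K'(+0) + K'(-0)) = β Re cot z + Im cot z = (β sin x cos x - sinh βx cosh βx) / |sin z|²`,
which is negative because `β sin x cos x < βx < sinh βx ≤ sinh βx cosh βx`. -/

open Complex

lemma Real.mul_sin_mul_cos_lt_sinh_mul_cosh {β x : ℝ} (hβ : 0 < β) (hx : 0 < x) :
    β * (Real.sin x * Real.cos x) < Real.sinh (β * x) * Real.cosh (β * x) := by
  have hβx : 0 < β * x := mul_pos hβ hx
  calc β * (Real.sin x * Real.cos x) = β * Real.sin (2 * x) / 2 := by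
        rw [Real.sin_two_mul]; ring
    _ < β * (2 * x) / 2 := by gcongr; exact Real.sin_lt (by positivity)
    _ = β * x := by ring
    _ < Real.sinh (β * x) := Real.self_lt_sinh_iff.2 hβx
    _ ≤ Real.sinh (β * x) * Real.cosh (β * x) :=
        le_mul_of_one_le_right (Real.sinh_pos_iff.2 hβx).le (Real.one_le_cosh _)

namespace Complex

lemma re_sin (z : ℂ) : (sin z).re = Real.sin z.re * Real.cosh z.im := by
  rw [sin_eq]; simp [← ofReal_sin, ← ofReal_cos, ← ofReal_sinh, ← ofReal_cosh]

lemma im_sin (z : ℂ) : (sin z).im = Real.cos z.re * Real.sinh z.im := by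
  rw [sin_eq]; simp [← ofReal_sin, ← ofReal_cos, ← ofReal_sinh, ← ofReal_cosh]

lemma re_cos (z : ℂ) : (cos z).re = Real.cos z.re * Real.cosh z.im := by
  rw [cos_eq]; simp [← ofReal_sin, ← ofReal_cos, ← ofReal_sinh, ← ofReal_cosh]

lemma im_cos (z : ℂ) : (cos z).im = -(Real.sin z.re * Real.sinh z.im) := by
  rw [cos_eq]; simp [← ofReal_sin, ← ofReal_cos, ← ofReal_sinh, ← ofReal_cosh]

lemma re_cot (z : ℂ) : (cot z).re = Real.sin z.re * Real.cos z.re / normSq (sin z) := by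
  rw [cot_eq_cos_div_sin, div_re, re_sin, im_sin, re_cos, im_cos, ← add_div]
  congr 1
  linear_combination (Real.sin z.re * Real.cos z.re) * Real.cosh_sq_sub_sinh_sq z.im

lemma im_cot (z : ℂ) : (cot z).im = -(Real.sinh z.im * Real.cosh z.im) / normSq (sin z) := by
  rw [cot_eq_cos_div_sin, div_im, re_sin, im_sin, re_cos, im_cos, div_sub_div_same]
  congr 1
  linear_combination (-(Real.sinh z.im * Real.cosh z.im)) * Real.sin_sq_add_cos_sq z.re

lemma sin_ne_zero_of_im_ne_zero {z : ℂ} (hz : z.im ≠ 0) : sin z ≠ 0 :=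
  sin_ne_zero_iff.2 fun k hk => hz (by simp [hk])

lemma mul_re_cot_add_im_cot_neg {β : ℝ} {z : ℂ} (hβ : 0 < β) (hre : 0 < z.re)
    (him : z.im = β * z.re) : β * (cot z).re + (cot z).im < 0 := by
  have hsin : 0 < normSq (sin z) :=
    normSq_pos.2 (sin_ne_zero_of_im_ne_zero (by rw [him]; positivity))
  rw [re_cot, im_cot, him, mul_div_assoc', ← add_div]
  exact div_neg_of_neg_of_pos (by linarith [Real.mul_sin_mul_cos_lt_sinh_mul_cosh hβ hre]) hsin

lemma exp_mul_I_sub_exp_neg_mul_I_div_sin {z : ℂ} (hz : sin z ≠ 0) :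
    exp (z * I) / sin z - exp (-(z * I)) / sin z = 2 * I := by
  rw [← sub_div, div_eq_iff hz, sin, neg_mul]
  linear_combination (exp (z * I) - exp (-(z * I))) * I_sq

lemma exp_mul_I_add_exp_neg_mul_I_div_sin (z : ℂ) :
    exp (z * I) / sin z + exp (-(z * I)) / sin z = 2 * cot z := by
  rw [← add_div, cot_eq_cos_div_sin, ← mul_div_assoc, two_cos, neg_mul]

lemma im_mul_one_add_ofReal_mul_I (w : ℂ) (β : ℝ) : (w * (1 + β * I)).im = β * w.re + w.im := by
  simp only [mul_im, add_re, add_im, one_re, one_im, mul_re, ofReal_re, ofReal_im, I_re, I_im]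
  ring

end Complex

noncomputable def kernelRate (β : ℝ) : ℂ := 2 * ((β : ℂ) - I) / (1 + (β : ℂ)^2)

noncomputable def kernelAngle (β : ℝ) : ℂ := 2 * (π : ℂ) * (1 + I * (β : ℂ)) / (1 + (β : ℂ)^2)

noncomputable def kernelQuot (β θ : ℝ) : ℂ := exp (kernelRate β * (θ - π)) / sin (kernelAngle β)

lemma Kd_eq_im_kernelQuot (β θ : ℝ) :
    Kd β θ = (kernelQuot β θ * (1 + β * I)).im / (2 * (1 + β^2)) := by
  change 2 * β / (1 + β^2) * (1 / 4 * (kernelQuot β θ).re) +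
    1 / (2 * (1 + β^2)) * (kernelQuot β θ).im = _
  rw [im_mul_one_add_ofReal_mul_I]
  field_simp
  ring

lemma one_add_ofReal_sq_ne_zero (β : ℝ) : (1 : ℂ) + (β : ℂ)^2 ≠ 0 := by
  exact_mod_cast (by positivity : (1 : ℝ) + β^2 ≠ 0)

lemma kernelAngle_eq (β : ℝ) :
    kernelAngle β = ((2 * π / (1 + β^2) : ℝ) : ℂ) + ((β * (2 * π / (1 + β^2)) : ℝ) : ℂ) * I := by
  have hden := one_add_ofReal_sq_ne_zero β
  rw [kernelAngle]
  push_cast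
  field_simp

lemma kernelAngle_re (β : ℝ) : (kernelAngle β).re = 2 * π / (1 + β^2) := by
  simp only [kernelAngle_eq, add_re, ofReal_re, mul_re, ofReal_im, I_re, I_im]
  ring

lemma kernelAngle_im (β : ℝ) : (kernelAngle β).im = β * (2 * π / (1 + β^2)) := by
  simp only [kernelAngle_eq, add_im, ofReal_im, mul_im, ofReal_re, I_re, I_im]
  ring

lemma sin_kernelAngle_ne_zero {β : ℝ} (hβ : 0 < β) : sin (kernelAngle β) ≠ 0 :=
  sin_ne_zero_of_im_ne_zero (by rw [kernelAngle_im]; positivity)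

lemma kernelQuot_zero (β : ℝ) : kernelQuot β 0 = exp (kernelAngle β * I) / sin (kernelAngle β) := by
  have hden := one_add_ofReal_sq_ne_zero β
  rw [kernelQuot, kernelRate, kernelAngle]
  congr 2
  push_cast
  field_simp
  linear_combination (-(π * β : ℂ)) * I_sq

lemma kernelQuot_two_pi (β : ℝ) :
    kernelQuot β (2 * π) = exp (-(kernelAngle β * I)) / sin (kernelAngle β) := by
  have hden := one_add_ofReal_sq_ne_zero β
  rw [kernelQuot, kernelRate, kernelAngle]
  congr 2
  push_cast
  field_simp
  linear_combination (β : ℂ) * I_sq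

lemma Kd_zero_sub_Kd_two_pi {β : ℝ} (hβ : 0 < β) : Kd β 0 - Kd β (2 * π) = 1 / (1 + β^2) := by
  rw [Kd_eq_im_kernelQuot, Kd_eq_im_kernelQuot, ← sub_div, ← sub_im, ← sub_mul, kernelQuot_zero,
    kernelQuot_two_pi, exp_mul_I_sub_exp_neg_mul_I_div_sin (sin_kernelAngle_ne_zero hβ),
    im_mul_one_add_ofReal_mul_I]
  simp only [mul_re, mul_im, re_ofNat, im_ofNat, I_re, I_im]
  field_simp
  ring

lemma Kd_zero_add_Kd_two_pi_neg {β : ℝ} (hβ : 0 < β) : Kd β 0 + Kd β (2 * π) < 0 := by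
  rw [Kd_eq_im_kernelQuot, Kd_eq_im_kernelQuot, ← add_div, ← add_im, ← add_mul, kernelQuot_zero,
    kernelQuot_two_pi, exp_mul_I_add_exp_neg_mul_I_div_sin, mul_assoc, mul_im,
    re_ofNat, im_ofNat, zero_mul, add_zero, im_mul_one_add_ofReal_mul_I]
  have hre : 0 < (kernelAngle β).re := by rw [kernelAngle_re]; positivity
  have him : (kernelAngle β).im = β * (kernelAngle β).re := by rw [kernelAngle_re, kernelAngle_im]
  have := mul_re_cot_add_im_cot_neg hβ hre him
  exact div_neg_of_neg_of_pos (by linarith) (by positivity)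

/-- For all `β > 0`, `K'(+0) − K'(−0) = 1/(1+β²)`; consequently
`K'(−0) < K'(+0) < −K'(−0)`, and in particular `K'(−0) < 0`. -/
theorem kernel_deriv_jump (β : ℝ) (hβ : 0 < β) :
    Kd β 0 - Kd β (2*Real.pi) = 1/(1+β^2) ∧
    Kd β (2*Real.pi) < Kd β 0 ∧
    Kd β 0 < -Kd β (2*Real.pi) ∧
    Kd β (2*Real.pi) < 0 := by
  have hjump := Kd_zero_sub_Kd_two_pi hβ
  have hmean := Kd_zero_add_Kd_two_pi_neg hβ
  have : 0 < 1 / (1 + β^2) := by positivity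
  exact ⟨hjump, by linarith, by linarith, by linarith⟩
end

section
/- For every β > 0 and every x > 0, β·sin x + cos x < e^{βx}. -/
open Real

/-- For every `β > 0` and every `x > 0`, `β·sin x + cos x < e^{βx}`. -/
theorem beta_sin_add_cos_lt_exp (β x : ℝ) (hβ : 0 < β) (hx : 0 < x) :
    β * Real.sin x + Real.cos x < Real.exp (β * x) :=
  calc β * Real.sin x + Real.cos x < β * x + 1 :=
        add_lt_add_of_lt_of_le (mul_lt_mul_of_pos_left (sin_lt hx) hβ) (cos_le_one x)
    _ < Real.exp (β * x) := add_one_lt_exp (mul_pos hβ hx).ne'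
end

section
/- Fix β > 0 and set γ = 4π/(1+β²). Define f(k) = cot(kγ) − e^{−kγβ}·csc(kγ) for those k ∈ (0,1] with sin(kγ) ≠ 0. Then at every such k, f is differentiable with f'(k) = γ·csc²(kγ)·e^{−kγβ}·( −e^{kγβ} + β·sin(kγ) + cos(kγ) ), and f'(k) < 0. -/
open Real

/-! Differentiating `(cos x - e^{-βx}) / sin x` and using `sin² + cos² = 1` gives
`csc² x · e^{-βx} · (-e^{βx} + β sin x + cos x)`; the chain rule supplies the factor `γ`.
For `x > 0` the bracket is negative because `e^{βx} > 1 + βx > cos x + β sin x`. -/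

theorem hasDerivAt_cos_div_sin_sub_exp_div_sin (b x : ℝ) (hx : sin x ≠ 0) :
    HasDerivAt (fun x => cos x / sin x - exp (-(x * b)) / sin x)
      ((1 / sin x) ^ 2 * exp (-(x * b)) * (-exp (x * b) + b * sin x + cos x)) x := by
  have hexp : HasDerivAt (fun x => exp (-(x * b))) (exp (-(x * b)) * -b) x := by
    simpa using ((hasDerivAt_mul_const b).neg).exp
  refine (((hasDerivAt_cos x).div (hasDerivAt_sin x) hx).sub
    (hexp.div (hasDerivAt_sin x) hx)).congr_deriv ?_
  have hexp_mul : exp (-(x * b)) * exp (x * b) = 1 := by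
    rw [← exp_add]; simp
  field_simp
  linear_combination hexp_mul - sin_sq_add_cos_sq x

theorem neg_exp_mul_add_mul_sin_add_cos_neg {b x : ℝ} (hb : 0 < b) (hx : 0 < x) :
    -exp (x * b) + b * sin x + cos x < 0 := by
  have hexp : x * b + 1 < exp (x * b) := add_one_lt_exp (by positivity)
  have hsin : b * sin x < b * x := mul_lt_mul_of_pos_left (sin_lt hx) hb
  have hcos : cos x ≤ 1 := cos_le_one x
  linarith

/-- Fix `β > 0` and `γ = 4π/(1+β²)`. At every `k ∈ (0,1]` with `sin(kγ) ≠ 0`, the function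
`f(k) = cot(kγ) − e^{−kγβ}·csc(kγ)` is differentiable with
`f'(k) = γ·csc²(kγ)·e^{−kγβ}·(−e^{kγβ} + β·sin(kγ) + cos(kγ))`, and `f'(k) < 0`. -/
theorem f_strict_decreasing (β : ℝ) (hβ : 0 < β) (γ : ℝ) (hγ : γ = 4*Real.pi/(1+β^2)) :
    ∀ k ∈ Set.Ioc (0:ℝ) 1, Real.sin (k*γ) ≠ 0 →
      HasDerivAt (fun k : ℝ =>
          Real.cos (k*γ) / Real.sin (k*γ) - Real.exp (-(k*γ*β)) / Real.sin (k*γ))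
        (γ * (1/Real.sin (k*γ))^2 * Real.exp (-(k*γ*β)) *
          (-Real.exp (k*γ*β) + β*Real.sin (k*γ) + Real.cos (k*γ))) k ∧
      γ * (1/Real.sin (k*γ))^2 * Real.exp (-(k*γ*β)) *
        (-Real.exp (k*γ*β) + β*Real.sin (k*γ) + Real.cos (k*γ)) < 0 := by
  intro k hk hs
  have hγ_pos : 0 < γ := by rw [hγ]; positivity
  refine ⟨?_, ?_⟩
  · have hcomp := (hasDerivAt_cos_div_sin_sub_exp_div_sin β (k * γ) hs).comp k
      (hasDerivAt_mul_const γ)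
    exact hcomp.congr_deriv (by ring)
  · exact mul_neg_of_pos_of_neg (by positivity)
      (neg_exp_mul_add_mul_sin_add_cos_neg hβ (mul_pos hk.1 hγ_pos))
end

section
/- Define g(β) = cot(γ(β)) − e^{−γ(β)·β}·csc(γ(β)) − β, where γ(β) = 4π/(1+β²). Then g is differentiable and g'(β) > 0 for every β ∈ (0, 1/√3) ∪ (1/√3, 1) ∪ (1, √3). -/
/-!
With `γ = 4π/(1+β²)`, `E = e^{-γβ}`, `c = cos γ`, `s = sin γ`, one has
`g' = N / ((1+β²)² s²)` where `N = 8πβ(1 - Ec) + 4πE(1-β²)s - (1+β²)² s²`, so only the sign of `N`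
matters.

For `1/3 < β² < 3` the angle `γ - 2π = 2π(1-β²)/(1+β²)` lies in `(-π, π)` and has the sign of
`1 - β²`, so the middle term of `N` is nonnegative; moreover `γβ > 5`, so `E < 1/6`, and
`8πβ · 5/6` beats `(1+β²)²`.

For `β² < 1/3` write `γ = 4π - θ` with `0 < θ = 4πβ²/(1+β²) < π`; then `s = -sin θ` and
`0 < sin θ ≤ min θ 1` make the negative terms of order `β²`, while `γ ≥ 3π` makes `E` small
enough for the leading term `8πβ(1 - E)` to dominate.
-/

open Real

noncomputable def γ (β : ℝ) : ℝ := 4 * π / (1 + β ^ 2)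

noncomputable def g (β : ℝ) : ℝ := cos (γ β) / sin (γ β) - exp (-γ β * β) / sin (γ β) - β

noncomputable def gDerivNum (β E c s : ℝ) : ℝ :=
  8 * π * β * (1 - E * c) + 4 * π * E * (1 - β ^ 2) * s - (1 + β ^ 2) ^ 2 * s ^ 2

theorem hasDerivAt_γ (β : ℝ) : HasDerivAt γ (-(8 * π * β) / (1 + β ^ 2) ^ 2) β := by
  have h := (hasDerivAt_const β (4 * π)).div ((hasDerivAt_pow 2 β).const_add 1) (by positivity)
  exact h.congr_deriv (by push_cast; ring)

theorem hasDerivAt_g {β : ℝ} (hs : sin (γ β) ≠ 0) :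
    HasDerivAt g (gDerivNum β (exp (-γ β * β)) (cos (γ β)) (sin (γ β)) /
      ((1 + β ^ 2) ^ 2 * sin (γ β) ^ 2)) β := by
  have hγ := hasDerivAt_γ β
  have hsin := hγ.sin
  have hexp := (hγ.neg.mul (hasDerivAt_id β)).exp
  have H := ((hγ.cos.div hsin hs).sub (hexp.div hsin hs)).sub (hasDerivAt_id β)
  refine H.congr_deriv ?_
  have hpy := sin_sq_add_cos_sq (γ β)
  simp only [gDerivNum, Pi.mul_apply, Pi.neg_apply, id]
  generalize sin (γ β) = S at hs hpy ⊢
  generalize cos (γ β) = C at hpy ⊢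
  generalize exp (-γ β * β) = X
  simp only [γ]
  field_simp
  linear_combination (8 * π * β) * hpy

theorem gDerivNum_pos_of_middle {β E c s : ℝ} (hβ : 0 < β) (hβ₁ : 1 < 3 * β ^ 2) (hβ₃ : β ^ 2 < 3)
    (hE₀ : 0 ≤ E) (hE : E < 1 / 6) (hc : c ≤ 1) (hs : 0 ≤ (1 - β ^ 2) * s) (hs₁ : s ^ 2 ≤ 1) :
    0 < gDerivNum β E c s := by
  have hπ := pi_gt_three
  have hlin : 8 * π * β * (5 / 6) < 8 * π * β * (1 - E * c) := by
    have := mul_le_of_le_one_right hE₀ hc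
    gcongr
    linarith
  have hsq : (1 + β ^ 2) ^ 2 * s ^ 2 ≤ (1 + β ^ 2) ^ 2 := by
    nlinarith [mul_le_mul_of_nonneg_left hs₁ (sq_nonneg (1 + β ^ 2))]
  have hpoly : (1 + β ^ 2) ^ 2 < 8 * π * β * (5 / 6) := by
    have hβ' : 1 / 2 < β := by nlinarith
    nlinarith [mul_pos (sub_pos.2 hβ') (by nlinarith : (0 : ℝ) < 9 / 2 - β)]
  have hmid : 0 ≤ 4 * π * E * ((1 - β ^ 2) * s) := by positivity
  unfold gDerivNum
  nlinarith

theorem gDerivNum_pos_of_small {β E c σ : ℝ} (hβ : 0 < β) (hβ₃ : 3 * β ^ 2 < 1) (hE₀ : 0 < E)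
    (hE : E * (1 + 3 * π * β + (3 * π * β) ^ 2 / 2) ≤ 1) (hc : c ≤ 1) (hσ₀ : 0 ≤ σ) (hσ₁ : σ ≤ 1)
    (hσθ : (1 + β ^ 2) * σ ≤ 4 * π * β ^ 2) :
    0 < gDerivNum β E c (-σ) := by
  have hπ := pi_gt_d2
  have hπ' := pi_lt_d2
  have hlin : 8 * π * β * (1 - E) ≤ 8 * π * β * (1 - E * c) := by
    have := mul_le_of_le_one_right hE₀.le hc
    gcongr
  have hmid : 4 * π * E * (1 - β ^ 2) * σ ≤ 4 * π * E * (4 * π * β ^ 2) := by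
    have : (1 - β ^ 2) * σ ≤ 4 * π * β ^ 2 := by nlinarith
    nlinarith [mul_le_mul_of_nonneg_left this (by positivity : (0 : ℝ) ≤ 4 * π * E)]
  have hsq : (1 + β ^ 2) ^ 2 * σ ^ 2 ≤ (1 + β ^ 2) * (4 * π * β ^ 2) := by
    have : σ ^ 2 ≤ σ := by nlinarith
    nlinarith [mul_le_mul_of_nonneg_left this (by positivity : (0 : ℝ) ≤ (1 + β ^ 2) ^ 2),
      mul_le_mul_of_nonneg_left hσθ (by positivity : (0 : ℝ) ≤ 1 + β ^ 2)]
  -- `1 + u ≤ e^u` alone (`u = 3πβ`) would fail near `β = 1/√3`; the `u²/2` term is needed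
  have hpoly : 2 + 4 * π * β < (2 - β - β ^ 3) * (1 + 3 * π * β + (3 * π * β) ^ 2 / 2) := by
    have hβ' : β < 0.578 := by nlinarith
    have h1 : (1 + β ^ 2) * (1 + 3 * π * β + (3 * π * β) ^ 2 / 2)
        < 4 / 3 + 4 * π * β + 6 * π ^ 2 * β ^ 2 := by
      nlinarith [mul_pos hβ (by positivity : (0 : ℝ) < π), sq_nonneg (π * β)]
    have h2 : 6 * π ^ 2 * β ^ 2 ≤ 3.468 * π ^ 2 * β := by
      nlinarith [mul_pos hβ (by positivity : (0 : ℝ) < π ^ 2)]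
    nlinarith [mul_pos hβ (by positivity : (0 : ℝ) < π)]
  have hE' : E * (2 + 4 * π * β) < 2 - β - β ^ 3 := by
    have hpos : 0 < 2 - β - β ^ 3 := by nlinarith
    calc E * (2 + 4 * π * β)
        < E * ((2 - β - β ^ 3) * (1 + 3 * π * β + (3 * π * β) ^ 2 / 2)) :=
          mul_lt_mul_of_pos_left hpoly hE₀
      _ = (E * (1 + 3 * π * β + (3 * π * β) ^ 2 / 2)) * (2 - β - β ^ 3) := by ring
      _ ≤ 2 - β - β ^ 3 := by nlinarith
  unfold gDerivNum
  nlinarith [mul_lt_mul_of_pos_left hE' (by positivity : (0 : ℝ) < 4 * π * β)]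

theorem mul_sin_pos_of_abs_lt_pi {x : ℝ} (hx₀ : x ≠ 0) (hx : |x| < π) : 0 < x * sin x := by
  obtain ⟨hlo, hhi⟩ := abs_lt.1 hx
  rcases hx₀.lt_or_gt with h | h
  · exact mul_pos_of_neg_of_neg h (sin_neg_of_neg_of_neg_pi_lt h hlo)
  · exact mul_pos h (sin_pos_of_pos_of_lt_pi h hhi)

theorem γ_sub_two_pi (β : ℝ) : γ β - 2 * π = 2 * π * (1 - β ^ 2) / (1 + β ^ 2) := by
  unfold γ
  field_simp
  ring

theorem one_sub_sq_mul_sin_γ_pos {β : ℝ} (hβ₁ : 1 < 3 * β ^ 2) (hβ₃ : β ^ 2 < 3) (hβ : β ^ 2 ≠ 1) :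
    0 < (1 - β ^ 2) * sin (γ β) := by
  have hx₀ : γ β - 2 * π ≠ 0 := by
    rw [γ_sub_two_pi]
    exact div_ne_zero (mul_ne_zero (by positivity) (sub_ne_zero.2 hβ.symm)) (by positivity)
  have hx : |γ β - 2 * π| < π := by
    have := pi_pos
    rw [γ_sub_two_pi, abs_lt, lt_div_iff₀ (by positivity), div_lt_iff₀ (by positivity)]
    constructor <;> nlinarith
  have key : (1 - β ^ 2) * sin (γ β) =
      (1 + β ^ 2) / (2 * π) * ((γ β - 2 * π) * sin (γ β - 2 * π)) := by
    rw [sin_sub_two_pi, γ_sub_two_pi]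
    field_simp
  rw [key]
  exact mul_pos (by positivity) (mul_sin_pos_of_abs_lt_pi hx₀ hx)

theorem exp_neg_γ_mul_lt_of_middle {β : ℝ} (hβ : 0 < β) (hβ₁ : 1 < 3 * β ^ 2) (hβ₃ : β ^ 2 < 3) :
    exp (-γ β * β) < 1 / 6 := by
  have h5 : 5 < γ β * β := by
    have := pi_gt_d2
    unfold γ
    rw [div_mul_eq_mul_div, lt_div_iff₀ (by positivity)]
    nlinarith [mul_pos (by nlinarith : (0 : ℝ) < β - 1 / 2) (by nlinarith : (0 : ℝ) < 2 - β)]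
  have h6 : 6 < exp (γ β * β) := by linarith [add_one_le_exp (γ β * β)]
  rw [neg_mul, exp_neg, one_div]
  exact inv_strictAnti₀ (by norm_num) h6

theorem sin_γ_eq_neg_sin (β : ℝ) : sin (γ β) = -sin (4 * π * β ^ 2 / (1 + β ^ 2)) := by
  have : γ β = -(4 * π * β ^ 2 / (1 + β ^ 2)) + (2 : ℕ) * (2 * π) := by
    unfold γ; field_simp; push_cast; ring
  rw [this, sin_add_nat_mul_two_pi, sin_neg]

theorem exp_neg_γ_mul_mul_le_of_small {β : ℝ} (hβ : 0 ≤ β) (hβ₃ : 3 * β ^ 2 ≤ 1) :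
    exp (-γ β * β) * (1 + 3 * π * β + (3 * π * β) ^ 2 / 2) ≤ 1 := by
  have h3π : 3 * π ≤ γ β := by
    have := pi_pos
    unfold γ
    rw [le_div_iff₀ (by positivity)]
    nlinarith
  have hquad : 1 + 3 * π * β + (3 * π * β) ^ 2 / 2 ≤ exp (γ β * β) :=
    (quadratic_le_exp_of_nonneg (by positivity)).trans
      (exp_le_exp.2 (mul_le_mul_of_nonneg_right h3π hβ))
  calc exp (-γ β * β) * (1 + 3 * π * β + (3 * π * β) ^ 2 / 2)
      ≤ exp (-γ β * β) * exp (γ β * β) := by gcongr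
    _ = 1 := by rw [← exp_add]; simp

theorem lt_one_div_sqrt_three_iff {β : ℝ} (hβ : 0 ≤ β) : β < 1 / √3 ↔ 3 * β ^ 2 < 1 := by
  rw [one_div, ← sqrt_inv, lt_sqrt hβ]
  constructor <;> intro h <;> linarith

theorem one_div_sqrt_three_lt_iff {β : ℝ} (hβ : 0 < β) : 1 / √3 < β ↔ 1 < 3 * β ^ 2 := by
  rw [one_div, ← sqrt_inv, sqrt_lt' hβ]
  constructor <;> intro h <;> linarith

theorem sin_γ_ne_zero_and_gDerivNum_pos_of_small {β : ℝ} (hβ : 0 < β) (hβ₃ : 3 * β ^ 2 < 1) :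
    sin (γ β) ≠ 0 ∧ 0 < gDerivNum β (exp (-γ β * β)) (cos (γ β)) (sin (γ β)) := by
  set θ := 4 * π * β ^ 2 / (1 + β ^ 2) with hθ
  have hθπ : θ < π := by
    have := pi_pos
    rw [hθ, div_lt_iff₀ (by positivity)]
    nlinarith
  have hsinθ : 0 < sin θ := sin_pos_of_pos_of_lt_pi (by positivity) hθπ
  have hsinθ_le : (1 + β ^ 2) * sin θ ≤ 4 * π * β ^ 2 := by
    calc (1 + β ^ 2) * sin θ ≤ (1 + β ^ 2) * θ := by gcongr; exact sin_le (by positivity)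
      _ = 4 * π * β ^ 2 := by rw [hθ]; field_simp
  rw [sin_γ_eq_neg_sin]
  exact ⟨neg_ne_zero.2 hsinθ.ne', gDerivNum_pos_of_small hβ hβ₃ (exp_pos _)
    (exp_neg_γ_mul_mul_le_of_small hβ.le hβ₃.le) (cos_le_one _) hsinθ.le (sin_le_one _) hsinθ_le⟩

theorem sin_γ_ne_zero_and_gDerivNum_pos_of_middle {β : ℝ} (hβ : 0 < β) (hβ₁ : 1 < 3 * β ^ 2)
    (hβ₃ : β ^ 2 < 3) (hβ₂ : β ^ 2 ≠ 1) :
    sin (γ β) ≠ 0 ∧ 0 < gDerivNum β (exp (-γ β * β)) (cos (γ β)) (sin (γ β)) := by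
  have hs := one_sub_sq_mul_sin_γ_pos hβ₁ hβ₃ hβ₂
  refine ⟨fun h ↦ by simp [h] at hs, gDerivNum_pos_of_middle hβ hβ₁ hβ₃ (exp_pos _).le
    (exp_neg_γ_mul_lt_of_middle hβ hβ₁ hβ₃) (cos_le_one _) hs.le (sin_sq_le_one _)⟩

/-- `g(β) = cot(γ(β)) − e^{−γ(β)β}·csc(γ(β)) − β` with `γ(β) = 4π/(1+β²)` is differentiable
with `g'(β) > 0` for every `β ∈ (0,1/√3) ∪ (1/√3,1) ∪ (1,√3)`. -/
theorem g_strict_increasing :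
    ∀ β ∈ Set.Ioo (0:ℝ) (1/Real.sqrt 3) ∪ Set.Ioo (1/Real.sqrt 3) 1 ∪
        Set.Ioo (1:ℝ) (Real.sqrt 3),
      DifferentiableAt ℝ (fun β : ℝ =>
          Real.cos (4*Real.pi/(1+β^2)) / Real.sin (4*Real.pi/(1+β^2)) -
            Real.exp (-(4*Real.pi/(1+β^2))*β) / Real.sin (4*Real.pi/(1+β^2)) - β) β ∧
      0 < deriv (fun β : ℝ =>
          Real.cos (4*Real.pi/(1+β^2)) / Real.sin (4*Real.pi/(1+β^2)) -
            Real.exp (-(4*Real.pi/(1+β^2))*β) / Real.sin (4*Real.pi/(1+β^2)) - β) β := by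
  intro β hβ
  have hreg : sin (γ β) ≠ 0 ∧ 0 < gDerivNum β (exp (-γ β * β)) (cos (γ β)) (sin (γ β)) := by
    simp only [Set.mem_union, Set.mem_Ioo] at hβ
    rcases hβ with (⟨hβ₀, hβ₁⟩ | ⟨hβ₀, hβ₁⟩) | ⟨hβ₀, hβ₁⟩
    · exact sin_γ_ne_zero_and_gDerivNum_pos_of_small hβ₀ ((lt_one_div_sqrt_three_iff hβ₀.le).1 hβ₁)
    · have hβ : 0 < β := lt_trans (by positivity) hβ₀
      exact sin_γ_ne_zero_and_gDerivNum_pos_of_middle hβ ((one_div_sqrt_three_lt_iff hβ).1 hβ₀)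
        (by nlinarith) (by nlinarith)
    · exact sin_γ_ne_zero_and_gDerivNum_pos_of_middle (by linarith) (by nlinarith)
        ((lt_sqrt (by linarith)).1 hβ₁) (by nlinarith)
  obtain ⟨hs, hnum⟩ := hreg
  have hg := hasDerivAt_g hs
  change DifferentiableAt ℝ g β ∧ 0 < deriv g β
  rw [hg.deriv]
  exact ⟨hg.differentiableAt, div_pos hnum (by positivity)⟩
end

section
/- Fix β > 0 and set z = 2π(β−i)/(1+β²). Then for every k ∈ [0,1] one has K(2kπ) = (1/2)·Im( e^{2kz} / (e^{2z} − 1) ) (note e^{2z} ≠ 1 since |e^{2z}| > 1). Consequently, for k ∈ (0,1), K(2kπ) = K(0) if and only if (e^{2kz} − 1)/(e^{2z} − 1) is a real number. -/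
open Real

/-!
Since `2π(1 + iβ)/(1 + β²) = i·z`, the denominator of the kernel is `sin(iz) = i·sinh z`, and
`2·sinh z = e^{-z}(e^{2z} - 1)`; at `θ = 2kπ` the exponent is `2kz - z`, so the factor `e^{-z}`
cancels and `K(2kπ) = (1/4)·Re(-2i·e^{2kz}/(e^{2z} - 1)) = (1/2)·Im(e^{2kz}/(e^{2z} - 1))`.
Finally `|e^{2z}| = exp(4πβ/(1 + β²)) > 1`.
-/

theorem Complex.sinh_eq_exp_neg_mul_exp_two_mul_sub_one (z : ℂ) :
    Complex.sinh z = Complex.exp (-z) * (Complex.exp (2 * z) - 1) / 2 := by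
  rw [Complex.sinh, mul_sub, ← Complex.exp_add]
  ring_nf

theorem Complex.exp_sub_div_sinh_mul_I (w z : ℂ) :
    Complex.exp (w - z) / (Complex.sinh z * Complex.I) =
      -2 * Complex.I * (Complex.exp w / (Complex.exp (2 * z) - 1)) := by
  have h : Complex.exp (-z) ≠ 0 := Complex.exp_ne_zero _
  rw [Complex.sinh_eq_exp_neg_mul_exp_two_mul_sub_one, sub_eq_add_neg, Complex.exp_add,
    show Complex.exp (-z) * (Complex.exp (2 * z) - 1) / 2 * Complex.I =
      (Complex.exp (2 * z) - 1) * (Complex.I / 2) * Complex.exp (-z) by ring,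
    mul_div_mul_right _ _ h, ← div_div, div_div_eq_mul_div, Complex.div_I]
  ring

theorem Complex.exp_ne_one_of_re_ne_zero {w : ℂ} (hw : w.re ≠ 0) : Complex.exp w ≠ 1 := by
  intro h
  have := Complex.norm_exp w
  rw [h, norm_one, eq_comm, Real.exp_eq_one_iff] at this
  exact hw this

theorem Kker_two_mul_mul_pi {β : ℝ} {z : ℂ}
    (hz : z = 2 * (Real.pi : ℂ) * ((β : ℂ) - Complex.I) / (1 + (β : ℂ) ^ 2)) (k : ℝ) :
    Kker β (2 * k * Real.pi) =
      (1 / 2) * (Complex.exp (2 * (k : ℂ) * z) / (Complex.exp (2 * z) - 1)).im := by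
  have hβ : (1 : ℂ) + (β : ℂ) ^ 2 ≠ 0 := by
    exact_mod_cast (by positivity : (1 : ℝ) + β ^ 2 ≠ 0)
  have hexp : 2 * ((β : ℂ) - Complex.I) / (1 + (β : ℂ) ^ 2) *
      (((2 * k * Real.pi : ℝ) : ℂ) - Real.pi) = 2 * k * z - z := by
    rw [hz]; push_cast; field_simp
  have hsin :
      2 * (Real.pi : ℂ) * (1 + Complex.I * β) / (1 + (β : ℂ) ^ 2) = z * Complex.I := by
    rw [hz]; field_simp; linear_combination Complex.I_sq
  rw [Kker, hexp, hsin, Complex.sin_mul_I, Complex.exp_sub_div_sinh_mul_I]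
  simp only [Complex.mul_re, Complex.mul_im, Complex.I_re, Complex.I_im, Complex.neg_re,
    Complex.neg_im, Complex.re_ofNat, Complex.im_ofNat]
  ring

theorem re_eq_of_eq_two_pi_mul {β : ℝ} {z : ℂ}
    (hz : z = 2 * (Real.pi : ℂ) * ((β : ℂ) - Complex.I) / (1 + (β : ℂ) ^ 2)) :
    z.re = 2 * Real.pi * β / (1 + β ^ 2) := by
  rw [hz, show (1 : ℂ) + (β : ℂ) ^ 2 = ((1 + β ^ 2 : ℝ) : ℂ) by push_cast; ring,
    Complex.div_ofReal_re]
  simp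

/-- Fix `β > 0` and `z = 2π(β−i)/(1+β²)`. Then `e^{2z} ≠ 1`; for every `k ∈ [0,1]`,
`K(2kπ) = (1/2)·Im(e^{2kz}/(e^{2z}−1))`; and for `k ∈ (0,1)`, `K(2kπ) = K(0)` iff
`(e^{2kz}−1)/(e^{2z}−1)` is real. -/
theorem kernel_simplified_form (β : ℝ) (hβ : 0 < β) (z : ℂ)
    (hz : z = 2*(Real.pi:ℂ)*((β:ℂ) - Complex.I)/(1+(β:ℂ)^2)) :
    Complex.exp (2*z) ≠ 1 ∧
    (∀ k ∈ Set.Icc (0:ℝ) 1,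
      Kker β (2*k*Real.pi) =
        (1/2) * (Complex.exp (2*(k:ℂ)*z) / (Complex.exp (2*z) - 1)).im) ∧
    (∀ k ∈ Set.Ioo (0:ℝ) 1,
      (Kker β (2*k*Real.pi) = Kker β 0 ↔
        ((Complex.exp (2*(k:ℂ)*z) - 1) / (Complex.exp (2*z) - 1)).im = 0)) := by
  have hre : (2 * z).re ≠ 0 := by
    simp only [Complex.mul_re, Complex.re_ofNat, Complex.im_ofNat, zero_mul, sub_zero,
      re_eq_of_eq_two_pi_mul hz]
    positivity
  have hK0 : Kker β 0 = (1 / 2) * (1 / (Complex.exp (2 * z) - 1)).im := by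
    simpa using Kker_two_mul_mul_pi hz 0
  refine ⟨Complex.exp_ne_one_of_re_ne_zero hre, fun k _ ↦ Kker_two_mul_mul_pi hz k,
    fun k _ ↦ ?_⟩
  rw [Kker_two_mul_mul_pi hz, hK0, sub_div, Complex.sub_im, sub_eq_zero]
  exact mul_right_inj' (by norm_num)
end

section
/- Fix β > 0. For every θ ∈ (0,2π), the second derivative K''(θ) vanishes if and only if K(θ) = β·K'(θ). -/
open Real

/-!
Write `E = exp(w(θ−π))/S`, so that `K = Re E / 4`, `K' = (β Re E + Im E) / (2(1+β²))` and
`E' = w E`. Differentiating once more gives `K'' = ((β²−1) Re E + 2β Im E)/(1+β²)²`, and a direct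
computation shows the identity `K − βK' = −(1+β²)/4 · K''`.
-/

theorem hasDerivAt_cexp_mul_sub_div (w c S : ℂ) (θ : ℝ) :
    HasDerivAt (fun x : ℝ => Complex.exp (w * ((x : ℂ) - c)) / S)
      (w * (Complex.exp (w * ((θ : ℂ) - c)) / S)) θ := by
  refine ((((Complex.ofRealCLM.hasDerivAt (x := θ)).sub_const c).const_mul w).cexp.div_const
    S).congr_deriv ?_
  simp only [Complex.ofRealCLM_apply, Complex.ofReal_one]
  ring

noncomputable def kernelExp (β θ : ℝ) : ℂ :=
  Complex.exp ((2*((β:ℂ) - Complex.I)/(1+(β:ℂ)^2)) * ((θ:ℂ) - (Real.pi:ℂ))) /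
    Complex.sin (2*(Real.pi:ℂ)*(1+Complex.I*(β:ℂ))/(1+(β:ℂ)^2))

theorem Kker_eq (β θ : ℝ) : Kker β θ = (kernelExp β θ).re / 4 := by
  rw [Kker, kernelExp]
  ring

theorem Kd_eq (β θ : ℝ) :
    Kd β θ = (β * (kernelExp β θ).re + (kernelExp β θ).im) / (2 * (1 + β ^ 2)) := by
  rw [Kd, Kker_eq, kernelExp]
  field_simp
  ring

theorem hasDerivAt_Kd (β θ : ℝ) :
    HasDerivAt (Kd β)
      (((β ^ 2 - 1) * (kernelExp β θ).re + 2 * β * (kernelExp β θ).im) / (1 + β ^ 2) ^ 2) θ := by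
  -- `w` is a real multiple of `β − i`, which makes `Re (w E)` and `Im (w E)` explicit.
  have hw : 2 * ((β:ℂ) - Complex.I) / (1 + (β:ℂ) ^ 2)
      = ((2 / (1 + β ^ 2) : ℝ) : ℂ) * ((β:ℂ) - Complex.I) := by
    push_cast
    ring
  have hE : HasDerivAt (kernelExp β)
      (2 * ((β:ℂ) - Complex.I) / (1 + (β:ℂ) ^ 2) * kernelExp β θ) θ :=
    hasDerivAt_cexp_mul_sub_div _ _ _ θ
  have hre := Complex.reCLM.hasFDerivAt.comp_hasDerivAt θ hE
  have him := Complex.imCLM.hasFDerivAt.comp_hasDerivAt θ hE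
  rw [show Kd β = _ from funext (Kd_eq β)]
  refine (((hre.const_mul β).add him).div_const (2 * (1 + β ^ 2))).congr_deriv ?_
  simp only [Complex.reCLM_apply, Complex.imCLM_apply, hw, mul_assoc, Complex.mul_re,
    Complex.mul_im, Complex.sub_re, Complex.sub_im, Complex.ofReal_re, Complex.ofReal_im,
    Complex.I_re, Complex.I_im]
  field_simp
  ring

theorem Kker_sub_mul_Kd (β θ : ℝ) :
    Kker β θ - β * Kd β θ = -((1 + β ^ 2) / 4) * Kdd β θ := by
  rw [Kdd, (hasDerivAt_Kd β θ).deriv, Kker_eq, Kd_eq]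
  field_simp
  ring

theorem second_deriv_vanishes_iff_general (β : ℝ) :
    ∀ θ ∈ Set.Ioo (0:ℝ) (2*Real.pi),
      (Kdd β θ = 0 ↔ Kker β θ = β * Kd β θ) := by
  intro θ _
  have hc : -((1 + β ^ 2) / 4) ≠ 0 := neg_ne_zero.mpr (by positivity)
  rw [← sub_eq_zero (a := Kker β θ), Kker_sub_mul_Kd, mul_eq_zero, or_iff_right hc]

/-- Fix `β > 0`. For every `θ ∈ (0,2π)`, `K''(θ) = 0` iff `K(θ) = β·K'(θ)`. -/
theorem second_deriv_vanishes_iff (β : ℝ) (hβ : 0 < β) :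
    ∀ θ ∈ Set.Ioo (0:ℝ) (2*Real.pi),
      (Kdd β θ = 0 ↔ Kker β θ = β * Kd β θ) :=
  second_deriv_vanishes_iff_general β
end

section
/- Fix β > 0 and suppose the equation K(θ) = K(0) has exactly three solutions in (0,2π), denoted θ₁ < θ₂ < θ₃. Then K'(+0) < 0, K'(θ₁) > 0, K'(θ₂) < 0, K'(θ₃) > 0, and K'(−0) < 0. -/
open Real

/-!
Write `w = a - i b` with `a = 2β/(1+β²) > 0` and `b = 2/(1+β²) ∈ (0, 2)`. Since
`K = Re (e^{w(θ-π)}/S) / 4`, the derivative is `K' = Re (w e^{w(θ-π)}/S) / 4`, and as soon as `K'`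
vanishes at some `s` it is a damped sinusoid `C e^{a(θ-s)} sin (b(θ-s))` with `C ≠ 0`.
Because `K(2π) = K(0)`, Rolle's theorem places zeros `s₀ < s₁ < s₂ < s₃` of `K'` in the gaps of
`0 < θ₁ < θ₂ < θ₃ < 2π`. Zeros of the sinusoid lie on `s₀ + (π/b)ℤ` and `4π/b > 2π`, so
`sᵢ = s₀ + iπ/b`; in particular `3π/b < 2π`, i.e. `b > 3/2`. For such `b` a direct computation
gives `K'(2π) < 0`, which fixes the sign of `C`; the signs at `0, θ₁, θ₂, θ₃` then alternate with
the half-periods of the sinusoid.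
-/

lemma neg_one_zpow_mul_sin_pos {x : ℝ} {k : ℤ} (h₁ : k * π < x) (h₂ : x < (k + 1) * π) :
    0 < (-1) ^ k * Real.sin x := by
  rw [← Real.sin_sub_int_mul_pi]
  exact Real.sin_pos_of_pos_of_lt_pi (by linarith) (by linarith)

lemma eq_pi_two_pi_three_pi_of_sin_eq_zero {u₁ u₂ u₃ : ℝ} (h₁ : 0 < u₁) (h₁₂ : u₁ < u₂)
    (h₂₃ : u₂ < u₃) (h₃ : u₃ < 4 * π) (hu₁ : Real.sin u₁ = 0) (hu₂ : Real.sin u₂ = 0)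
    (hu₃ : Real.sin u₃ = 0) : u₁ = π ∧ u₂ = 2 * π ∧ u₃ = 3 * π := by
  obtain ⟨n₁, rfl⟩ := Real.sin_eq_zero_iff.1 hu₁
  obtain ⟨n₂, rfl⟩ := Real.sin_eq_zero_iff.1 hu₂
  obtain ⟨n₃, rfl⟩ := Real.sin_eq_zero_iff.1 hu₃
  have h₁' : (0 : ℝ) < n₁ := pos_of_mul_pos_left h₁ pi_pos.le
  have h₁₂' : (n₁ : ℝ) < n₂ := lt_of_mul_lt_mul_right h₁₂ pi_pos.le
  have h₂₃' : (n₂ : ℝ) < n₃ := lt_of_mul_lt_mul_right h₂₃ pi_pos.le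
  have h₃' : (n₃ : ℝ) < 4 := lt_of_mul_lt_mul_right h₃ pi_pos.le
  norm_cast at h₁' h₁₂' h₂₃' h₃'
  obtain ⟨rfl, rfl, rfl⟩ : n₁ = 1 ∧ n₂ = 2 ∧ n₃ = 3 := by omega
  norm_num

namespace Kker

open Complex (I)

noncomputable def w (β : ℝ) : ℂ := 2 * ((β : ℂ) - I) / (1 + (β : ℂ) ^ 2)

noncomputable def S (β : ℝ) : ℂ := Complex.sin (2 * (π : ℂ) * (1 + I * β) / (1 + (β : ℂ) ^ 2))

noncomputable def E (β θ : ℝ) : ℂ := Complex.exp (w β * (θ - π)) / S β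

variable {β : ℝ}

lemma two_div_one_add_sq_lt_two (hβ : β ≠ 0) : 2 / (1 + β ^ 2) < 2 := by
  rw [div_lt_iff₀ (by positivity)]
  linarith [sq_pos_of_ne_zero hβ]

lemma one_add_sq_ne_zero (β : ℝ) : 1 + (β : ℂ) ^ 2 ≠ 0 := by
  exact_mod_cast (by positivity : (1 + β ^ 2 : ℝ) ≠ 0)

lemma w_eq (β : ℝ) : w β = (2 * β / (1 + β ^ 2) : ℝ) - (2 / (1 + β ^ 2) : ℝ) * I := by
  have := one_add_sq_ne_zero β
  rw [w]; push_cast; field_simp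

lemma w_re (β : ℝ) : (w β).re = 2 * β / (1 + β ^ 2) := by
  rw [w_eq]; simp only [Complex.sub_re, Complex.ofReal_re, Complex.mul_re, Complex.I_re,
    Complex.ofReal_im, Complex.I_im]; ring

lemma w_im (β : ℝ) : (w β).im = -(2 / (1 + β ^ 2)) := by
  rw [w_eq]; simp only [Complex.sub_im, Complex.ofReal_re, Complex.mul_im, Complex.I_re,
    Complex.ofReal_im, Complex.I_im]; ring

lemma w_ne_zero (β : ℝ) : w β ≠ 0 := fun h => by
  have := w_im β
  rw [h, Complex.zero_im] at this
  linarith [(by positivity : 0 < 2 / (1 + β ^ 2))]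

lemma S_eq_sin (β : ℝ) : S β = Complex.sin (π * w β * I) := by
  have := one_add_sq_ne_zero β
  rw [S, w]; congr 1; field_simp; ring_nf; rw [Complex.I_sq]; ring

lemma S_eq_sinh_mul_I (β : ℝ) : S β = Complex.sinh (π * w β) * I := by
  rw [S_eq_sin, Complex.sin_mul_I]

lemma S_ne_zero (hβ : β ≠ 0) : S β ≠ 0 := by
  rw [S_eq_sin, Ne, Complex.sin_eq_zero_iff]
  rintro ⟨k, hk⟩
  have : 1 + β ^ 2 ≠ 0 := by positivity
  simpa [w_re, hβ, this] using congrArg Complex.im hk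

lemma Kker_eq (β θ : ℝ) : Kker β θ = (E β θ).re / 4 := by
  rw [Kker, E, w, S]; ring

lemma Kd_eq (β θ : ℝ) : Kd β θ = (w β * E β θ).re / 4 := by
  rw [Kd, Kker_eq, Complex.mul_re, w_re, w_im]
  have : 1 + β ^ 2 ≠ 0 := by positivity
  rw [E, w, S]; field_simp; ring

lemma hasDerivAt_E (β θ : ℝ) : HasDerivAt (E β) (w β * E β θ) θ := by
  have h : HasDerivAt (fun x : ℝ => w β * ((x : ℂ) - π)) (w β) θ := by
    simpa using ((Complex.ofRealCLM.hasDerivAt (x := θ)).sub_const (π : ℂ)).const_mul (w β)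
  rw [show w β * E β θ = Complex.exp (w β * (θ - π)) * w β / S β by rw [E]; ring]
  exact h.cexp.div_const (S β)

lemma hasDerivAt_Kker (β θ : ℝ) : HasDerivAt (Kker β) (Kd β θ) θ := by
  rw [funext (Kker_eq β), Kd_eq]
  exact (Complex.reCLM.hasFDerivAt.comp_hasDerivAt θ (hasDerivAt_E β θ)).div_const 4

lemma continuous_Kker (β : ℝ) : Continuous (Kker β) :=
  continuous_iff_continuousAt.2 fun θ => (hasDerivAt_Kker β θ).continuousAt

lemma exists_Kd_eq_zero {x y : ℝ} (hxy : x < y) (h : Kker β x = Kker β y) :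
    ∃ s ∈ Set.Ioo x y, Kd β s = 0 :=
  exists_hasDerivAt_eq_zero hxy (continuous_Kker β).continuousOn h
    fun θ _ => hasDerivAt_Kker β θ

lemma E_two_pi_sub_E_zero (hβ : β ≠ 0) : E β (2 * π) - E β 0 = -2 * I := by
  have hS := S_ne_zero hβ
  rw [S_eq_sinh_mul_I] at hS
  rw [E, E, S_eq_sinh_mul_I, ← sub_div, div_eq_iff hS, Complex.sinh]
  push_cast
  ring_nf
  rw [Complex.I_sq]
  ring

lemma Kker_two_pi (hβ : β ≠ 0) : Kker β (2 * π) = Kker β 0 := by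
  rw [Kker_eq, Kker_eq, div_left_inj' four_ne_zero, ← sub_eq_zero, ← Complex.sub_re,
    E_two_pi_sub_E_zero hβ]
  simp

lemma E_eq_mul_exp (β s θ : ℝ) : E β θ = E β s * Complex.exp (w β * (θ - s : ℝ)) := by
  rw [E, E, div_mul_eq_mul_div, ← Complex.exp_add]
  push_cast; ring_nf

lemma Kd_eq_mul_sin (hβ : β ≠ 0) {s : ℝ} (hs : Kd β s = 0) :
    ∃ C ≠ 0, ∀ θ, Kd β θ =
      C * Real.exp (2 * β / (1 + β ^ 2) * (θ - s)) * Real.sin (2 / (1 + β ^ 2) * (θ - s)) := by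
  set u := w β * E β s
  have hu : u.re = 0 := by rw [Kd_eq] at hs; linarith
  have hu0 : u ≠ 0 :=
    mul_ne_zero (w_ne_zero β) (div_ne_zero (Complex.exp_ne_zero _) (S_ne_zero hβ))
  refine ⟨u.im / 4, fun h => hu0 (Complex.ext hu (by simpa using h)), fun θ => ?_⟩
  rw [Kd_eq, E_eq_mul_exp β s θ, ← mul_assoc, Complex.mul_re, hu, Complex.exp_re, Complex.exp_im,
    Complex.re_mul_ofReal, Complex.im_mul_ofReal, w_re, w_im, neg_mul, Real.sin_neg]
  ring

lemma Kd_two_pi_neg (hβ : 0 < β) (hb : 3 / 2 < 2 / (1 + β ^ 2)) : Kd β (2 * π) < 0 := by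
  set q := Complex.exp (w β * (-(2 * π) : ℝ))
  have hq : E β (2 * π) * (1 - q) = -2 * I := by
    rw [mul_one_sub, ← E_two_pi_sub_E_zero hβ.ne', E_eq_mul_exp β (2 * π) 0, zero_sub]
  have hq0 : 1 - q ≠ 0 := right_ne_zero_of_mul (by rw [hq]; simp)
  have hKd : Kd β (2 * π) = (w β / (1 - q)).im / 2 := by
    rw [Kd_eq, (eq_div_iff hq0).mpr hq,
      show w β * (-2 * I / (1 - q)) = ((-2 : ℝ) : ℂ) * (I * (w β / (1 - q))) by push_cast; ring,
      Complex.re_ofReal_mul, Complex.I_mul_re]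
    ring
  rw [hKd, Complex.div_im, ← sub_div]
  refine div_neg_of_neg_of_pos (div_neg_of_neg_of_pos ?_ (Complex.normSq_pos.2 hq0)) two_pos
  simp only [q, Complex.sub_re, Complex.sub_im, Complex.one_re, Complex.one_im, Complex.exp_re,
    Complex.exp_im, Complex.re_mul_ofReal, Complex.im_mul_ofReal, w_re, w_im]
  -- `q = r e^{2πib}` with `r = e^{-2πa} < 1` and `sin 2πb < 0`, so both terms are negative.
  have ha : 0 < 2 * β / (1 + β ^ 2) := by positivity
  have hb' := two_div_one_add_sq_lt_two hβ.ne'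
  generalize 2 * β / (1 + β ^ 2) = a at *
  generalize 2 / (1 + β ^ 2) = b at *
  have hr : rexp (a * -(2 * π)) < 1 := Real.exp_lt_one_iff.2 (by nlinarith [pi_pos])
  have hsin : Real.sin (b * (2 * π)) < 0 := by
    have := neg_one_zpow_mul_sin_pos (k := 3) (x := b * (2 * π)) (by push_cast; nlinarith [pi_pos])
      (by push_cast; nlinarith [pi_pos])
    norm_num at this
    exact this
  rw [neg_mul_neg]
  nlinarith [mul_pos ha (mul_pos (Real.exp_pos (a * -(2 * π))) (neg_pos.2 hsin)),
    mul_le_of_le_one_right (Real.exp_pos (a * -(2 * π))).le (Real.cos_le_one (b * (2 * π)))]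

lemma Kd_sign_pattern (hβ : 0 < β) {s₀ s₁ s₂ s₃ : ℝ} (h₀ : 0 < s₀) (h₀₁ : s₀ < s₁)
    (h₁₂ : s₁ < s₂) (h₂₃ : s₂ < s₃) (h₃ : s₃ < 2 * π) (hd₀ : Kd β s₀ = 0) (hd₁ : Kd β s₁ = 0)
    (hd₂ : Kd β s₂ = 0) (hd₃ : Kd β s₃ = 0) :
    (∀ θ ∈ Set.Ico 0 s₀, Kd β θ < 0) ∧ (∀ θ ∈ Set.Ioo s₀ s₁, 0 < Kd β θ) ∧
      (∀ θ ∈ Set.Ioo s₁ s₂, Kd β θ < 0) ∧ (∀ θ ∈ Set.Ioo s₂ s₃, 0 < Kd β θ) ∧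
      Kd β (2 * π) < 0 := by
  obtain ⟨C, hC, hKd⟩ := Kd_eq_mul_sin hβ.ne' hd₀
  set b := 2 / (1 + β ^ 2)
  have hb : 0 < b ∧ b < 2 := ⟨by positivity, two_div_one_add_sq_lt_two hβ.ne'⟩
  have hsin : ∀ θ, Kd β θ = 0 → Real.sin (b * (θ - s₀)) = 0 := fun θ h => by
    simpa [hKd, hC, (Real.exp_pos _).ne'] using h
  have sign : ∀ θ (k : ℤ), k * π < b * (θ - s₀) → b * (θ - s₀) < (k + 1) * π →
      0 < (-1) ^ k * C * Kd β θ := fun θ k h₁ h₂ => by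
    rw [hKd, show (-1) ^ k * C * (C * rexp _ * Real.sin _) =
      C ^ 2 * rexp _ * ((-1) ^ k * Real.sin _) by ring]
    exact mul_pos (mul_pos (sq_pos_of_ne_zero hC) (Real.exp_pos _)) (neg_one_zpow_mul_sin_pos h₁ h₂)
  obtain ⟨e₁, e₂, e₃⟩ := eq_pi_two_pi_three_pi_of_sin_eq_zero (by nlinarith) (by nlinarith)
    (by nlinarith) (by nlinarith) (hsin s₁ hd₁) (hsin s₂ hd₂) (hsin s₃ hd₃)
  have h2π := Kd_two_pi_neg hβ (by nlinarith : 3 / 2 < b)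
  have hC₀ : 0 < C := by
    have := sign (2 * π) 3 (by push_cast; nlinarith) (by push_cast; nlinarith)
    norm_num at this; nlinarith
  refine ⟨fun θ hθ => ?_, fun θ hθ => ?_, fun θ hθ => ?_, fun θ hθ => ?_, h2π⟩
  · have := sign θ (-1) (by push_cast; nlinarith [hθ.1]) (by push_cast; nlinarith [hθ.2])
    norm_num at this; nlinarith
  · have := sign θ 0 (by push_cast; nlinarith [hθ.1]) (by push_cast; nlinarith [hθ.2])
    norm_num at this; nlinarith
  · have := sign θ 1 (by push_cast; nlinarith [hθ.1]) (by push_cast; nlinarith [hθ.2])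
    norm_num at this; nlinarith
  · have := sign θ 2 (by push_cast; nlinarith [hθ.1]) (by push_cast; nlinarith [hθ.2])
    norm_num at this; nlinarith

end Kker

/-- Fix `β > 0` and suppose `K(θ) = K(0)` has exactly three solutions
`θ₁ < θ₂ < θ₃` in `(0,2π)`. Then `K'(+0) < 0`, `K'(θ₁) > 0`, `K'(θ₂) < 0`,
`K'(θ₃) > 0`, and `K'(−0) < 0`. -/
theorem sign_of_Kd_at_solutions (β : ℝ) (hβ : 0 < β) (θ₁ θ₂ θ₃ : ℝ)
    (h12 : θ₁ < θ₂) (h23 : θ₂ < θ₃)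
    (hset : {θ : ℝ | θ ∈ Set.Ioo 0 (2*Real.pi) ∧ Kker β θ = Kker β 0} = {θ₁, θ₂, θ₃}) :
    Kd β 0 < 0 ∧ 0 < Kd β θ₁ ∧ Kd β θ₂ < 0 ∧ 0 < Kd β θ₃ ∧ Kd β (2*Real.pi) < 0 := by
  have mem : ∀ θ ∈ ({θ₁, θ₂, θ₃} : Set ℝ), θ ∈ Set.Ioo 0 (2 * π) ∧ Kker β θ = Kker β 0 := by
    rw [← hset]; exact fun θ hθ => hθ
  obtain ⟨⟨h₀₁, -⟩, hK₁⟩ := mem θ₁ (by simp)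
  obtain ⟨-, hK₂⟩ := mem θ₂ (by simp)
  obtain ⟨⟨-, h₃₄⟩, hK₃⟩ := mem θ₃ (by simp)
  obtain ⟨s₀, ⟨hs₀, hs₀'⟩, hd₀⟩ := Kker.exists_Kd_eq_zero h₀₁ hK₁.symm
  obtain ⟨s₁, ⟨hs₁, hs₁'⟩, hd₁⟩ := Kker.exists_Kd_eq_zero h12 (hK₁.trans hK₂.symm)
  obtain ⟨s₂, ⟨hs₂, hs₂'⟩, hd₂⟩ := Kker.exists_Kd_eq_zero h23 (hK₂.trans hK₃.symm)
  obtain ⟨s₃, ⟨hs₃, hs₃'⟩, hd₃⟩ :=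
    Kker.exists_Kd_eq_zero h₃₄ (hK₃.trans (Kker.Kker_two_pi hβ.ne').symm)
  obtain ⟨I₀, I₁, I₂, I₃, h2π⟩ := Kker.Kd_sign_pattern hβ hs₀ (hs₀'.trans hs₁)
    (hs₁'.trans hs₂) (hs₂'.trans hs₃) hs₃' hd₀ hd₁ hd₂ hd₃
  exact ⟨I₀ 0 ⟨le_rfl, hs₀⟩, I₁ θ₁ ⟨hs₀', hs₁⟩, I₂ θ₂ ⟨hs₁', hs₂⟩, I₃ θ₃ ⟨hs₂', hs₃⟩, h2π⟩
end

section
/- Fix β > 0 and assume there exists α ∈ (π,2π) such that K'(θ) > K'(0) for all θ ∈ (0,α), K'(α) = K'(0), and K'(θ) < K'(0) for all θ ∈ (α,2π). Then for every θ ∈ (0, 2π−α) one has K(2π−θ) − K(0) > −K'(0)·θ > K(0) − K(θ); in particular K(2π−θ) − K(0) > 0 and (K(θ)−K(0))/(K(2π−θ)−K(0)) > −1. -/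
open Real

/-!
Write `z = wπ`. Since `S = sin (i z) = i sinh z`, the kernel is
`K(θ) = ¼ Re (e^{w(θ−π)} / (i sinh z))`. Hence `K(2π) − K(0) = ¼ Re (2 sinh z / (i sinh z)) = 0`,
and `K'(0) = ¼ Im (w coth z)`. For `z = a − i b` with `a, b > 0`,
`Im (z coth z) = (a sin 2b − b sinh 2a) / (2 |sinh z|²)`, which is negative because
`sin 2b < 2b` and `2a < sinh 2a`; so `K'(0) < 0`.
By the mean value theorem, `K' > K'(0)` on `(0, α)` gives `K(θ) − K(0) > K'(0) θ`, and
`K' < K'(0)` on `(α, 2π)` together with `K(2π) = K(0)` gives `K(2π − θ) − K(0) > −K'(0) θ`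
whenever `2π − θ > α`.
-/

open ComplexConjugate

namespace Complex

theorem cosh_mul_conj_sinh (z : ℂ) :
    cosh z * conj (sinh z) = (Real.sinh (2 * z.re) - Real.sin (2 * z.im) * I) / 2 := by
  rw [← sinh_conj]
  have h : sinh (z + conj z) - sinh (z - conj z) = 2 * (cosh z * sinh (conj z)) := by
    rw [sinh_add, sinh_sub]; ring
  rw [add_conj, sub_conj, sinh_mul_I, ← ofReal_sinh, ← ofReal_sin] at h
  linear_combination -h / 2

theorem im_mul_coth_neg {z : ℂ} (hre : 0 < z.re) (him : z.im < 0) :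
    (z * (cosh z / sinh z)).im < 0 := by
  have hsinh : 2 * z.re < Real.sinh (2 * z.re) := Real.self_lt_sinh_iff.2 (by linarith)
  have hsin : 2 * z.im < Real.sin (2 * z.im) := by
    have := Real.sin_lt (x := -(2 * z.im)) (by linarith)
    rw [Real.sin_neg] at this
    linarith
  have hX := cosh_mul_conj_sinh z
  have hX_re : (cosh z * conj (sinh z)).re = Real.sinh (2 * z.re) / 2 := by
    rw [hX]; simp only [sub_re, div_ofNat_re, ofReal_re, mul_re, ofReal_im, I_re, I_im]; ring
  have hX_im : (cosh z * conj (sinh z)).im = -Real.sin (2 * z.im) / 2 := by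
    rw [hX]; simp only [sub_im, div_ofNat_im, ofReal_re, mul_im, ofReal_im, I_re, I_im]; ring
  have hne : sinh z ≠ 0 := by
    intro h0
    rw [h0, map_zero, mul_zero, zero_re] at hX_re
    linarith
  rw [div_eq_mul_inv, inv_def, ← mul_assoc, ← mul_assoc, mul_assoc z, im_mul_ofReal]
  refine mul_neg_of_neg_of_pos ?_ (inv_pos.2 (normSq_pos.2 hne))
  rw [mul_im, hX_re, hX_im]
  nlinarith [mul_lt_mul_of_pos_left hsin hre, mul_lt_mul_of_neg_left hsinh him]

theorem re_exp_neg_div_I_mul_sinh (z : ℂ) :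
    (exp (-z) / (I * sinh z)).re = (exp z / (I * sinh z)).re := by
  rw [eq_comm, ← sub_eq_zero, ← sub_re, ← sub_div, ← two_sinh]
  by_cases h : sinh z = 0
  · simp [h]
  · rw [mul_comm I, ← div_div, mul_div_assoc, div_self h, mul_one, div_I]
    simp

end Complex

theorem mul_sub_lt_sub_of_hasDerivAt {f f' : ℝ → ℝ} {a b C x y : ℝ}
    (hf : ∀ t, HasDerivAt f (f' t) t) (hf' : ∀ t ∈ Set.Ioo a b, C < f' t)
    (hax : a ≤ x) (hxy : x < y) (hyb : y ≤ b) : C * (y - x) < f y - f x := by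
  refine (convex_Icc a b).mul_sub_lt_image_sub_of_lt_deriv
    (fun t _ => (hf t).continuousAt.continuousWithinAt)
    (fun t _ => (hf t).differentiableAt.differentiableWithinAt) (fun t ht => ?_)
    x ⟨hax, by linarith⟩ y ⟨by linarith, hyb⟩ hxy
  rw [interior_Icc] at ht
  rw [(hf t).deriv]
  exact hf' t ht

theorem sub_lt_mul_sub_of_hasDerivAt {f f' : ℝ → ℝ} {a b C x y : ℝ}
    (hf : ∀ t, HasDerivAt f (f' t) t) (hf' : ∀ t ∈ Set.Ioo a b, f' t < C)
    (hax : a ≤ x) (hxy : x < y) (hyb : y ≤ b) : f y - f x < C * (y - x) := by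
  refine (convex_Icc a b).image_sub_lt_mul_sub_of_deriv_lt
    (fun t _ => (hf t).continuousAt.continuousWithinAt)
    (fun t _ => (hf t).differentiableAt.differentiableWithinAt) (fun t ht => ?_)
    x ⟨hax, by linarith⟩ y ⟨by linarith, hyb⟩ hxy
  rw [interior_Icc] at ht
  rw [(hf t).deriv]
  exact hf' t ht

section Kernel

open Complex

noncomputable def kernelExponent (β : ℝ) : ℂ := 2 * ((β : ℂ) - I) / (1 + (β : ℂ) ^ 2)

noncomputable def complexKernel (β θ : ℝ) : ℂ :=
  exp (kernelExponent β * ((θ : ℂ) - π)) / (I * sinh (kernelExponent β * π))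

variable (β : ℝ)

theorem kernelExponent_eq :
    kernelExponent β = ((2 * β / (1 + β ^ 2) : ℝ) : ℂ) - ((2 / (1 + β ^ 2) : ℝ) : ℂ) * I := by
  have : (1 + (β : ℂ) ^ 2) ≠ 0 := by exact_mod_cast (by positivity : (1 + β ^ 2) ≠ 0)
  unfold kernelExponent
  push_cast
  field_simp

theorem kernelExponent_re : (kernelExponent β).re = 2 * β / (1 + β ^ 2) := by
  rw [kernelExponent_eq]
  simp only [sub_re, ofReal_re, mul_re, I_re, I_im, ofReal_im]
  ring

theorem kernelExponent_im : (kernelExponent β).im = -(2 / (1 + β ^ 2)) := by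
  rw [kernelExponent_eq]
  simp only [sub_im, ofReal_re, mul_im, I_re, I_im, ofReal_im]
  ring

theorem sin_eq_I_mul_sinh_kernelExponent :
    Complex.sin (2 * π * (1 + I * β) / (1 + (β : ℂ) ^ 2)) =
      I * sinh (kernelExponent β * π) := by
  rw [show 2 * π * (1 + I * β) / (1 + (β : ℂ) ^ 2) = kernelExponent β * π * I by
      unfold kernelExponent; linear_combination (2 * π / (1 + (β : ℂ) ^ 2)) * I_sq,
    sin_mul_I, mul_comm]

theorem Kker_eq_re_complexKernel (θ : ℝ) : Kker β θ = 1 / 4 * (complexKernel β θ).re := by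
  rw [Kker, sin_eq_I_mul_sinh_kernelExponent]; rfl

theorem Kd_eq_re_mul_complexKernel (θ : ℝ) :
    Kd β θ = 1 / 4 * (kernelExponent β * complexKernel β θ).re := by
  rw [Kd, Kker_eq_re_complexKernel, sin_eq_I_mul_sinh_kernelExponent]
  change _ + _ * (complexKernel β θ).im = _
  rw [mul_re, kernelExponent_re, kernelExponent_im]
  field_simp
  ring

theorem hasDerivAt_Kker (θ : ℝ) : HasDerivAt (Kker β) (Kd β θ) θ := by
  have h := ((((hasDerivAt_id (θ : ℂ)).sub_const (π : ℂ)).const_mul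
    (kernelExponent β)).cexp).div_const (I * sinh (kernelExponent β * π))
  rw [funext (Kker_eq_re_complexKernel β), Kd_eq_re_mul_complexKernel]
  refine (h.real_of_complex.const_mul _).congr_deriv ?_
  simp only [complexKernel, id, mul_one]
  ring_nf

theorem complexKernel_zero :
    complexKernel β 0 = exp (-(kernelExponent β * π)) / (I * sinh (kernelExponent β * π)) := by
  rw [complexKernel]; push_cast; ring_nf

theorem complexKernel_two_pi :
    complexKernel β (2 * π) = exp (kernelExponent β * π) / (I * sinh (kernelExponent β * π)) := by
  rw [complexKernel]; push_cast; ring_nf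

theorem Kker_two_pi : Kker β (2 * π) = Kker β 0 := by
  rw [Kker_eq_re_complexKernel, Kker_eq_re_complexKernel, complexKernel_zero,
    complexKernel_two_pi, re_exp_neg_div_I_mul_sinh]

theorem Kd0_eq_im_mul_coth :
    Kd0 β = (kernelExponent β *
      (cosh (kernelExponent β * π) / sinh (kernelExponent β * π))).im / 4 := by
  have hsum : complexKernel β 0 + complexKernel β (2 * π) =
      -2 * I * (cosh (kernelExponent β * π) / sinh (kernelExponent β * π)) := by
    rw [complexKernel_zero, complexKernel_two_pi, ← add_div, add_comm, ← two_cosh, mul_comm I,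
      ← div_div, div_I]
    ring
  rw [Kd0, Kd_eq_re_mul_complexKernel, Kd_eq_re_mul_complexKernel, ← mul_add, ← add_re,
    ← mul_add, hsum, mul_left_comm]
  simp only [mul_re, mul_im, I_re, I_im]
  norm_num
  ring

theorem Kd0_neg (hβ : 0 < β) : Kd0 β < 0 := by
  have h := im_mul_coth_neg (z := kernelExponent β * π)
    (by rw [re_mul_ofReal, kernelExponent_re]; positivity)
    (by rw [im_mul_ofReal, kernelExponent_im, neg_mul]; exact neg_neg_of_pos (by positivity))
  rw [mul_right_comm, im_mul_ofReal] at h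
  rw [Kd0_eq_im_mul_coth]
  linarith [neg_of_mul_neg_left h pi_pos.le]

end Kernel

theorem R2_gt_neg_one_general (β : ℝ) (hβ : 0 < β) (α : ℝ)
    (hα : α ∈ Set.Ioo Real.pi (2*Real.pi))
    (h1 : ∀ θ ∈ Set.Ioo (0:ℝ) α, Kd0 β < Kd β θ)
    (h3 : ∀ θ ∈ Set.Ioo α (2*Real.pi), Kd β θ < Kd0 β) :
    ∀ θ ∈ Set.Ioo (0:ℝ) (2*Real.pi - α),
      -Kd0 β * θ < Kker β (2*Real.pi - θ) - Kker β 0 ∧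
      Kker β 0 - Kker β θ < -Kd0 β * θ ∧
      0 < Kker β (2*Real.pi - θ) - Kker β 0 ∧
      -1 < (Kker β θ - Kker β 0) / (Kker β (2*Real.pi - θ) - Kker β 0) := by
  rintro θ ⟨hθ0, hθα⟩
  have hright : Kd0 β * θ < Kker β θ - Kker β 0 := by
    simpa using mul_sub_lt_sub_of_hasDerivAt (hasDerivAt_Kker β) h1 le_rfl hθ0
      (by linarith [hα.1])
  have hleft : Kker β 0 - Kker β (2 * π - θ) < Kd0 β * θ := by
    simpa [Kker_two_pi] using sub_lt_mul_sub_of_hasDerivAt (hasDerivAt_Kker β) h3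
      (x := 2 * π - θ) (by linarith) (by linarith) le_rfl
  have hpos : 0 < Kker β (2 * π - θ) - Kker β 0 := by nlinarith [Kd0_neg β hβ]
  refine ⟨by linarith, by linarith, hpos, ?_⟩
  rw [lt_div_iff₀ hpos]
  linarith

/-- Fix `β > 0` and assume there is `α ∈ (π,2π)` with `K' > K'(0)` on `(0,α)`,
`K'(α) = K'(0)`, and `K' < K'(0)` on `(α,2π)`. Then for every `θ ∈ (0,2π−α)`,
`K(2π−θ) − K(0) > −K'(0)·θ > K(0) − K(θ)`; in particular `K(2π−θ) − K(0) > 0` and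
`(K(θ)−K(0))/(K(2π−θ)−K(0)) > −1`. -/
theorem R2_gt_neg_one (β : ℝ) (hβ : 0 < β) (α : ℝ)
    (hα : α ∈ Set.Ioo Real.pi (2*Real.pi))
    (h1 : ∀ θ ∈ Set.Ioo (0:ℝ) α, Kd0 β < Kd β θ)
    (h2 : Kd β α = Kd0 β)
    (h3 : ∀ θ ∈ Set.Ioo α (2*Real.pi), Kd β θ < Kd0 β) :
    ∀ θ ∈ Set.Ioo (0:ℝ) (2*Real.pi - α),
      -Kd0 β * θ < Kker β (2*Real.pi - θ) - Kker β 0 ∧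
      Kker β 0 - Kker β θ < -Kd0 β * θ ∧
      0 < Kker β (2*Real.pi - θ) - Kker β 0 ∧
      -1 < (Kker β θ - Kker β 0) / (Kker β (2*Real.pi - θ) - Kker β 0) :=
  R2_gt_neg_one_general β hβ α hα h1 h3
end
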